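/- arXiv:2007.12807 — 2 statements merged into one kernel-verified Lean document; each statement's English description precedes it below -/
import Mathlib

section
/- Let ȳ₁, ȳ₂ be real numbers and for w = (w₁, w₂) in the standard 1-simplex define U_g(w) = -(w₁ȳ₁ + w₂ȳ₂)² - 2. If ȳ₁·ȳ₂ < 0, then the maximizer of U_g over the simplex has first component w₁ = |ȳ₂|/(|ȳ₁| + |ȳ₂|); if ȳ₁·ȳ₂ ≥ 0 and |ȳ₁| ≤ |ȳ₂| then w₁ = 1 maximizes; if ȳ₁·ȳ₂ ≥ 0 and |ȳ₁| > |ȳ₂| then w₁ = 0 maximizes. -/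
/-- Example 1, generalist oracle weights: maximizer of
`U_g(w) = -(w₁ȳ₁ + w₂ȳ₂)² - 2` over the standard 1-simplex. -/
theorem stmt_0 (y1 y2 : ℝ) :
    (y1 * y2 < 0 →
      ∀ w1 w2 : ℝ, 0 ≤ w1 → 0 ≤ w2 → w1 + w2 = 1 →
        -(w1 * y1 + w2 * y2) ^ 2 - 2 ≤
          -((|y2| / (|y1| + |y2|)) * y1 + (1 - |y2| / (|y1| + |y2|)) * y2) ^ 2 - 2) ∧
    (0 ≤ y1 * y2 → |y1| ≤ |y2| →
      ∀ w1 w2 : ℝ, 0 ≤ w1 → 0 ≤ w2 → w1 + w2 = 1 →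
        -(w1 * y1 + w2 * y2) ^ 2 - 2 ≤ -((1 : ℝ) * y1 + 0 * y2) ^ 2 - 2) ∧
    (0 ≤ y1 * y2 → |y2| < |y1| →
      ∀ w1 w2 : ℝ, 0 ≤ w1 → 0 ≤ w2 → w1 + w2 = 1 →
        -(w1 * y1 + w2 * y2) ^ 2 - 2 ≤ -((0 : ℝ) * y1 + 1 * y2) ^ 2 - 2) := by
  refine ⟨?_, ?_, ?_⟩
  · intro h w1 w2 hw1 hw2 hsum
    have hy1 : y1 ≠ 0 := by rintro rfl; simp at h
    have hy2 : y2 ≠ 0 := by rintro rfl; simp at h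
    have hs : (0:ℝ) < |y1| + |y2| := by positivity
    have hzero : |y2| * y1 + |y1| * y2 = 0 := by
      rcases le_or_gt y1 0 with h1 | h1 <;> rcases le_or_gt y2 0 with h2 | h2
      · exfalso; nlinarith
      · rw [abs_of_pos h2, abs_of_nonpos h1]; ring
      · rw [abs_of_nonpos h2, abs_of_pos h1]; ring
      · exfalso; nlinarith
    have hR : (|y2| / (|y1| + |y2|)) * y1 + (1 - |y2| / (|y1| + |y2|)) * y2 = 0 := by
      field_simp
      linarith [hzero]
    rw [hR]
    nlinarith [sq_nonneg (w1 * y1 + w2 * y2)]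
  · intro h hle w1 w2 hw1 hw2 hsum
    have h1 : y1 ^ 2 ≤ y2 ^ 2 := by nlinarith [sq_abs y1, sq_abs y2, abs_nonneg y1, abs_nonneg y2]
    have h2 : y1 ^ 2 ≤ y1 * y2 := by
      nlinarith [mul_le_mul_of_nonneg_left hle (abs_nonneg y1), sq_abs y1, abs_mul y1 y2,
        abs_of_nonneg h]
    have hw2' : w2 = 1 - w1 := by linarith
    subst hw2'
    nlinarith [mul_nonneg (mul_nonneg hw1 (by linarith : (0:ℝ) ≤ 1 - w1)) (sub_nonneg.mpr h2),
      mul_nonneg (mul_nonneg (by linarith : (0:ℝ) ≤ 1 - w1) (by linarith : (0:ℝ) ≤ 1 - w1))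
        (sub_nonneg.mpr h1)]
  · intro h hlt w1 w2 hw1 hw2 hsum
    have h1 : y2 ^ 2 ≤ y1 ^ 2 := by nlinarith [sq_abs y1, sq_abs y2, abs_nonneg y1, abs_nonneg y2]
    have h2 : y2 ^ 2 ≤ y1 * y2 := by
      nlinarith [mul_le_mul_of_nonneg_left hlt.le (abs_nonneg y2), sq_abs y2, abs_mul y1 y2,
        abs_of_nonneg h]
    have hw1' : w1 = 1 - w2 := by linarith
    subst hw1'
    nlinarith [mul_nonneg (mul_nonneg hw2 (by linarith : (0:ℝ) ≤ 1 - w2)) (sub_nonneg.mpr h2),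
      mul_nonneg (mul_nonneg (by linarith : (0:ℝ) ≤ 1 - w2) (by linarith : (0:ℝ) ≤ 1 - w2))
        (sub_nonneg.mpr h1)]
end

section
/- Let μ₁ ~ N(0, σ²), ε ~ N(0, 1/n) independent of μ₁, set ȳ₁ = μ₁ + ε, and let ȳ₂ ~ N(0, σ² + 1/n) be independent of (μ₁, ε). For fixed w = (w₁, w₂) with w₁ + w₂ = 1, define d = 2(ȳ₁ - μ₁)(w₁ȳ₁ + w₂ȳ₂). Then E[d] = 2w₁/n and Var[d] = 4(σ² + 2/n)w₁²/n + 4(σ² + 1/n)w₂²/n. -/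
/-!
Since `ȳ₁ - μ₁ = ε`, we have `d = (2 w₂ ε) ȳ₂ + 2 w₁ (ε μ₁ + ε²)`. Because `ȳ₂` is centred and
independent of `(μ₁, ε)`, it contributes nothing to `E[d]`, and in `E[(d - E d)²]` its cross
term vanishes, leaving `E[(2 w₂ ε)²] E[ȳ₂²] + E[(2 w₁ (ε μ₁ + ε² - 1/n))²]`. The same splitting
with `μ₁` in place of `ȳ₂` reduces the last term to `E[ε²] E[μ₁²] + Var(ε²)`. The only Gaussian
input beyond the variance is `E[ε⁴] = 3/n²`, which follows from Stein's recursion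
`E[X^(k+2)] = (k+1) v E[X^k]` for `X ~ N(0, v)`, i.e. integration by parts against the density.
-/

open MeasureTheory ProbabilityTheory
open scoped NNReal ENNReal

lemma MeasureTheory.MemLp.mul_of_four {Ω : Type*} [MeasurableSpace Ω] {μ : Measure Ω}
    {X Y : Ω → ℝ} (hX : MemLp X 4 μ) (hY : MemLp Y 4 μ) : MemLp (fun ω => X ω * Y ω) 2 μ := by
  have : ENNReal.HolderTriple 4 4 2 := ⟨by
    rw [← two_mul, show (4 : ℝ≥0∞) = 2 * 2 by norm_num, ENNReal.mul_inv (by simp) (by simp),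
      ← mul_assoc, ENNReal.mul_inv_cancel (by simp) (by simp), one_mul]⟩
  exact hY.mul' hX

namespace ProbabilityTheory

lemma integrable_pow_gaussianReal (m : ℝ) (v : ℝ≥0) (k : ℕ) :
    Integrable (fun x : ℝ => x ^ k) (gaussianReal m v) := by
  simpa using integrable_pow_of_mem_interior_integrableExpSet
    (by simp [integrableExpSet_id_gaussianReal]) k (X := id) (μ := gaussianReal m v)

lemma hasDerivAt_gaussianPDFReal (m : ℝ) (v : ℝ≥0) (x : ℝ) :
    HasDerivAt (gaussianPDFReal m v) (-((x - m) / v) * gaussianPDFReal m v x) x := by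
  have hexp : HasDerivAt (fun y => -(y - m) ^ 2 / (2 * v)) (-((x - m) / v)) x :=
    ((((hasDerivAt_id' x).sub_const m).pow 2).neg.div_const _).congr_deriv (by ring)
  rw [gaussianPDFReal_def]
  exact (hexp.exp.const_mul _).congr_deriv (by ring)

lemma integrable_gaussianPDFReal_mul_pow {v : ℝ≥0} (hv : v ≠ 0) (k : ℕ) :
    Integrable (fun x => gaussianPDFReal 0 v x * x ^ k) := by
  have h := integrable_pow_gaussianReal 0 v k
  rw [gaussianReal_of_var_ne_zero _ hv, gaussianPDF_def,
    integrable_withDensity_iff_integrable_smul' (by fun_prop) (by simp)] at h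
  simpa [ENNReal.toReal_ofReal (gaussianPDFReal_nonneg _ _ _)] using h

lemma integral_pow_add_two_gaussianReal (v : ℝ≥0) (k : ℕ) :
    ∫ x, x ^ (k + 2) ∂gaussianReal 0 v = (k + 1) * v * ∫ x, x ^ k ∂gaussianReal 0 v := by
  rcases eq_or_ne v 0 with rfl | hv
  · simp
  have hint (j : ℕ) := integrable_gaussianPDFReal_mul_pow hv j
  simp only [integral_gaussianReal_eq_integral_smul hv, smul_eq_mul]
  have ibp := integral_mul_deriv_eq_deriv_mul_of_integrable
    (u := fun x => x ^ (k + 1)) (u' := fun x => (k + 1) * x ^ k)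
    (v := fun x => -v * gaussianPDFReal 0 v x) (v' := fun x => x * gaussianPDFReal 0 v x)
    (fun x _ => by simpa using hasDerivAt_pow (k + 1) x)
    (fun x _ => ((hasDerivAt_gaussianPDFReal 0 v x).const_mul _).congr_deriv
      (by field_simp; ring))
    ((hint (k + 2)).congr (ae_of_all _ fun x => by simp only [Pi.mul_apply]; ring))
    (((hint k).const_mul (-(k + 1) * v)).congr
      (ae_of_all _ fun x => by simp only [Pi.mul_apply]; ring))
    (((hint (k + 1)).const_mul (-v)).congr
      (ae_of_all _ fun x => by simp only [Pi.mul_apply]; ring))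
  calc ∫ x, gaussianPDFReal 0 v x * x ^ (k + 2)
      = ∫ x, x ^ (k + 1) * (x * gaussianPDFReal 0 v x) := by congr with x; ring
    _ = ∫ x, (k + 1) * v * (gaussianPDFReal 0 v x * x ^ k) := by
      rw [ibp, ← integral_neg]; congr with x; ring
    _ = _ := integral_const_mul _ _

lemma integral_sq_gaussianReal (v : ℝ≥0) : ∫ x, x ^ 2 ∂gaussianReal 0 v = v := by
  simpa using integral_pow_add_two_gaussianReal v 0

lemma integral_sq_sub_variance_sq_gaussianReal (v : ℝ≥0) :
    ∫ x, (x ^ 2 - v) ^ 2 ∂gaussianReal 0 v = 2 * v ^ 2 := by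
  have h4 : ∫ x, x ^ 4 ∂gaussianReal 0 v = 3 * v ^ 2 := by
    rw [integral_pow_add_two_gaussianReal v 2, integral_sq_gaussianReal]; ring
  have hint (k : ℕ) := integrable_pow_gaussianReal 0 v k
  calc ∫ x, (x ^ 2 - v) ^ 2 ∂gaussianReal 0 v
      = ∫ x, x ^ 4 - 2 * v * x ^ 2 + (v : ℝ) ^ 2 ∂gaussianReal 0 v := by congr with x; ring
    _ = 2 * v ^ 2 := by
      rw [integral_add ((hint 4).sub' ((hint 2).const_mul _)) (integrable_const _),
        integral_sub (hint 4) ((hint 2).const_mul _), integral_const_mul, h4,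
        integral_sq_gaussianReal, integral_const]
      simp only [probReal_univ, smul_eq_mul, one_mul]
      ring

variable {Ω : Type*} [MeasurableSpace Ω] {μ : Measure Ω}

lemma integral_mul_add_of_indepFun {U W Y : Ω → ℝ} (hind : IndepFun U Y μ)
    (hU : Integrable U μ) (hW : Integrable W μ) (hY : Integrable Y μ) (hY0 : ∫ ω, Y ω ∂μ = 0) :
    ∫ ω, U ω * Y ω + W ω ∂μ = ∫ ω, W ω ∂μ := by
  have hUY : Integrable (fun ω => U ω * Y ω) μ := hind.integrable_mul hU hY
  rw [integral_add hUY hW, hind.integral_fun_mul_eq_mul_integral hU.1 hY.1, hY0, mul_zero,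
    zero_add]

lemma integral_sq_mul_add_of_indepFun [IsFiniteMeasure μ] {U W Y : Ω → ℝ}
    (hind : IndepFun (fun ω => (U ω, W ω)) Y μ)
    (hU : MemLp U 2 μ) (hW : MemLp W 2 μ) (hY : MemLp Y 2 μ) (hY0 : ∫ ω, Y ω ∂μ = 0) :
    ∫ ω, (U ω * Y ω + W ω) ^ 2 ∂μ
      = (∫ ω, U ω ^ 2 ∂μ) * (∫ ω, Y ω ^ 2 ∂μ) + ∫ ω, W ω ^ 2 ∂μ := by
  have hU2Y2 : IndepFun (fun ω => U ω ^ 2) (fun ω => Y ω ^ 2) μ :=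
    hind.comp (measurable_fst.pow_const 2) (measurable_id.pow_const 2)
  have hUWY : IndepFun (fun ω => U ω * W ω) Y μ :=
    hind.comp (measurable_fst.mul measurable_snd) measurable_id
  have hUW : Integrable (fun ω => U ω * W ω) μ := hU.integrable_mul hW
  have hY1 : Integrable Y μ := hY.integrable one_le_two
  have hU2Y2int : Integrable (fun ω => U ω ^ 2 * Y ω ^ 2) μ :=
    hU2Y2.integrable_mul hU.integrable_sq hY.integrable_sq
  have hUWYint : Integrable (fun ω => 2 * (U ω * W ω * Y ω)) μ :=
    (hUWY.integrable_mul hUW hY1).const_mul 2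
  calc ∫ ω, (U ω * Y ω + W ω) ^ 2 ∂μ
      = ∫ ω, U ω ^ 2 * Y ω ^ 2 + 2 * (U ω * W ω * Y ω) + W ω ^ 2 ∂μ := by congr with ω; ring
    _ = (∫ ω, U ω ^ 2 * Y ω ^ 2 ∂μ) + 2 * (∫ ω, U ω * W ω * Y ω ∂μ) + ∫ ω, W ω ^ 2 ∂μ := by
      rw [integral_add (hU2Y2int.fun_add hUWYint) hW.integrable_sq,
        integral_add hU2Y2int hUWYint, integral_const_mul]
    _ = _ := by
      rw [hU2Y2.integral_fun_mul_eq_mul_integral hU.integrable_sq.1 hY.integrable_sq.1,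
        hUWY.integral_fun_mul_eq_mul_integral hUW.1 hY1.1, hY0]
      ring

lemma hasLaw_of_map_eq {𝓧 : Type*} [MeasurableSpace 𝓧] {X : Ω → 𝓧} {ν : Measure 𝓧}
    [NeZero ν] (h : μ.map X = ν) : HasLaw X ν μ :=
  ⟨AEMeasurable.of_map_ne_zero (h ▸ NeZero.ne ν), h⟩

variable {X Y Z : Ω → ℝ} {v s t : ℝ≥0}

lemma HasLaw.memLp_of_gaussianReal {m : ℝ} (hX : HasLaw X (gaussianReal m v) μ) {p : ℝ≥0∞}
    (hp : p ≠ ∞) : MemLp X p μ := by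
  have h := memLp_id_gaussianReal' (μ := m) (v := v) p hp
  rwa [← hX.map_eq, memLp_map_measure_iff aestronglyMeasurable_id hX.aemeasurable] at h

lemma HasLaw.integrable_of_gaussianReal {m : ℝ} (hX : HasLaw X (gaussianReal m v) μ) :
    Integrable X μ :=
  memLp_one_iff_integrable.mp (hX.memLp_of_gaussianReal (by simp))

lemma HasLaw.integral_eq_zero_of_gaussianReal (hX : HasLaw X (gaussianReal 0 v) μ) :
    ∫ ω, X ω ∂μ = 0 := by
  rw [hX.integral_eq, integral_id_gaussianReal]

lemma HasLaw.integral_sq_of_gaussianReal (hX : HasLaw X (gaussianReal 0 v) μ) :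
    ∫ ω, X ω ^ 2 ∂μ = v := by
  rw [← integral_sq_gaussianReal, ← hX.integral_comp (by fun_prop)]
  rfl

lemma HasLaw.integral_sq_sub_variance_sq_of_gaussianReal (hX : HasLaw X (gaussianReal 0 v) μ) :
    ∫ ω, (X ω ^ 2 - v) ^ 2 ∂μ = 2 * v ^ 2 := by
  rw [← integral_sq_sub_variance_sq_gaussianReal, ← hX.integral_comp (by fun_prop)]
  rfl

lemma HasLaw.memLp_sq_sub_of_gaussianReal (hX : HasLaw X (gaussianReal 0 v) μ) (c : ℝ) :
    MemLp (fun ω => X ω ^ 2 - c) 2 μ := by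
  have := hX.isProbabilityMeasure
  have hX₄ : MemLp X 4 μ := hX.memLp_of_gaussianReal (by simp)
  have h := (hX₄.mul_of_four hX₄).sub (memLp_const c)
  simp only [← sq] at h
  exact h

lemma HasLaw.integral_mul_add_sq_of_indepFun (hX : HasLaw X (gaussianReal 0 v) μ)
    (hXY : IndepFun X Y μ) (hY : Integrable Y μ) (hY0 : ∫ ω, Y ω ∂μ = 0) :
    ∫ ω, X ω * Y ω + X ω ^ 2 ∂μ = v := by
  have hX₂ : MemLp X 2 μ := hX.memLp_of_gaussianReal (by simp)
  rw [integral_mul_add_of_indepFun hXY hX.integrable_of_gaussianReal hX₂.integrable_sq hY hY0,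
    hX.integral_sq_of_gaussianReal]

lemma HasLaw.integral_sq_mul_add_sq_sub_variance_of_indepFun
    (hX : HasLaw X (gaussianReal 0 v) μ) (hXY : IndepFun X Y μ) (hY : MemLp Y 2 μ)
    (hY0 : ∫ ω, Y ω ∂μ = 0) :
    ∫ ω, (X ω * Y ω + (X ω ^ 2 - v)) ^ 2 ∂μ = v * ∫ ω, Y ω ^ 2 ∂μ + 2 * v ^ 2 := by
  have := hX.isProbabilityMeasure
  have hind : IndepFun (fun ω => (X ω, X ω ^ 2 - v)) Y μ :=
    hXY.comp (measurable_id.prodMk ((measurable_id.pow_const 2).sub_const _)) measurable_id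
  rw [integral_sq_mul_add_of_indepFun hind (hX.memLp_of_gaussianReal (by simp))
      (hX.memLp_sq_sub_of_gaussianReal _) hY hY0,
    hX.integral_sq_of_gaussianReal, hX.integral_sq_sub_variance_sq_of_gaussianReal]

-- `X, Y, Z` stand for `ε, μ₁, ȳ₂`.
lemma integral_deviation_of_gaussianReal (hX : HasLaw X (gaussianReal 0 v) μ)
    (hY : HasLaw Y (gaussianReal 0 s) μ) (hZ : HasLaw Z (gaussianReal 0 t) μ)
    (hXY : IndepFun X Y μ) (hYXZ : IndepFun (fun ω => (Y ω, X ω)) Z μ) (a b : ℝ) :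
    ∫ ω, 2 * X ω * (a * (Y ω + X ω) + b * Z ω) ∂μ = 2 * a * v := by
  have := hX.isProbabilityMeasure
  have hX₂ : MemLp X 2 μ := hX.memLp_of_gaussianReal (by simp)
  have hXY₂ : MemLp (fun ω => X ω * Y ω) 2 μ :=
    (hX.memLp_of_gaussianReal (by simp)).mul_of_four (hY.memLp_of_gaussianReal (by simp))
  have hind : IndepFun (fun ω => 2 * b * X ω) Z μ :=
    hYXZ.comp (φ := fun p : ℝ × ℝ => 2 * b * p.2) (by fun_prop) measurable_id
  calc _ = ∫ ω, 2 * b * X ω * Z ω + 2 * a * (X ω * Y ω + X ω ^ 2) ∂μ := by congr with ω; ring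
    _ = 2 * a * v := by
      rw [integral_mul_add_of_indepFun hind (hX.integrable_of_gaussianReal.const_mul _)
        (((hXY₂.integrable one_le_two).fun_add hX₂.integrable_sq).const_mul _)
        hZ.integrable_of_gaussianReal hZ.integral_eq_zero_of_gaussianReal, integral_const_mul,
        hX.integral_mul_add_sq_of_indepFun hXY hY.integrable_of_gaussianReal
          hY.integral_eq_zero_of_gaussianReal]

lemma integral_sq_deviation_sub_of_gaussianReal (hX : HasLaw X (gaussianReal 0 v) μ)
    (hY : HasLaw Y (gaussianReal 0 s) μ) (hZ : HasLaw Z (gaussianReal 0 t) μ)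
    (hXY : IndepFun X Y μ) (hYXZ : IndepFun (fun ω => (Y ω, X ω)) Z μ) (a b : ℝ) :
    ∫ ω, (2 * X ω * (a * (Y ω + X ω) + b * Z ω) - 2 * a * v) ^ 2 ∂μ
      = 4 * a ^ 2 * v * (s + 2 * v) + 4 * b ^ 2 * v * t := by
  have := hX.isProbabilityMeasure
  have hW : MemLp (fun ω => X ω * Y ω + (X ω ^ 2 - v)) 2 μ :=
    ((hX.memLp_of_gaussianReal (by simp)).mul_of_four (hY.memLp_of_gaussianReal (by simp))).add
      (hX.memLp_sq_sub_of_gaussianReal _)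
  have hind : IndepFun (fun ω => (2 * b * X ω, 2 * a * (X ω * Y ω + (X ω ^ 2 - v)))) Z μ :=
    hYXZ.comp (φ := fun p : ℝ × ℝ => (2 * b * p.2, 2 * a * (p.2 * p.1 + (p.2 ^ 2 - v))))
      (by fun_prop) measurable_id
  calc _ = ∫ ω, (2 * b * X ω * Z ω + 2 * a * (X ω * Y ω + (X ω ^ 2 - v))) ^ 2 ∂μ := by
        congr with ω; ring
    _ = _ := by
      rw [integral_sq_mul_add_of_indepFun hind
        ((hX.memLp_of_gaussianReal (by simp)).const_mul _) (hW.const_mul _)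
        (hZ.memLp_of_gaussianReal (by simp)) hZ.integral_eq_zero_of_gaussianReal]
      simp only [mul_pow, integral_const_mul]
      rw [hX.integral_sq_of_gaussianReal, hZ.integral_sq_of_gaussianReal,
        hX.integral_sq_mul_add_sq_sub_variance_of_indepFun hXY
          (hY.memLp_of_gaussianReal (by simp)) hY.integral_eq_zero_of_gaussianReal,
        hY.integral_sq_of_gaussianReal]
      ring

end ProbabilityTheory

theorem stmt_3_general {Ω : Type*} [MeasurableSpace Ω] (μ : Measure Ω) [IsProbabilityMeasure μ]
    (σ : ℝ) (n : ℕ) (mu1 eps y2 : Ω → ℝ)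
    (hmu : Measure.map mu1 μ = gaussianReal 0 (σ ^ 2 : ℝ).toNNReal)
    (heps : Measure.map eps μ = gaussianReal 0 (1 / n : ℝ).toNNReal)
    (hy2 : Measure.map y2 μ = gaussianReal 0 (σ ^ 2 + 1 / n : ℝ).toNNReal)
    (hind1 : IndepFun mu1 eps μ)
    (hind2 : IndepFun (fun ω => (mu1 ω, eps ω)) y2 μ)
    (w1 w2 : ℝ) :
    (∫ ω, 2 * ((mu1 ω + eps ω) - mu1 ω)
        * (w1 * (mu1 ω + eps ω) + w2 * y2 ω) ∂μ) = 2 * w1 / n ∧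
    (∫ ω, (2 * ((mu1 ω + eps ω) - mu1 ω)
          * (w1 * (mu1 ω + eps ω) + w2 * y2 ω) - 2 * w1 / n) ^ 2 ∂μ)
      = 4 * (σ ^ 2 + 2 / n) * w1 ^ 2 / n + 4 * (σ ^ 2 + 1 / n) * w2 ^ 2 / n := by
  have hv : ((1 / n : ℝ).toNNReal : ℝ) = 1 / n := Real.coe_toNNReal _ (by positivity)
  have hσ : ((σ ^ 2 : ℝ).toNNReal : ℝ) = σ ^ 2 := Real.coe_toNNReal _ (sq_nonneg σ)
  have hσv : ((σ ^ 2 + 1 / n : ℝ).toNNReal : ℝ) = σ ^ 2 + 1 / n :=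
    Real.coe_toNNReal _ (by positivity)
  have hm := hasLaw_of_map_eq hmu
  have he := hasLaw_of_map_eq heps
  have hy := hasLaw_of_map_eq hy2
  have hc : 2 * w1 / n = 2 * w1 * ((1 / n : ℝ).toNNReal : ℝ) := by rw [hv]; ring
  simp only [add_sub_cancel_left]
  constructor
  · rw [integral_deviation_of_gaussianReal he hm hy hind1.symm hind2, hc]
  · rw [hc, integral_sq_deviation_sub_of_gaussianReal he hm hy hind1.symm hind2, hv, hσ, hσv]
    ring

/-- Mean and variance of the principal deviation of the DR utility estimate for
specialist prediction (study 1) in Example 1. Here `ȳ₁ = μ₁ + ε`. -/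
theorem stmt_3 {Ω : Type*} [MeasurableSpace Ω] (μ : Measure Ω) [IsProbabilityMeasure μ]
    (σ : ℝ) (n : ℕ) (hn : 0 < n) (mu1 eps y2 : Ω → ℝ)
    (hmu : Measure.map mu1 μ = gaussianReal 0 (σ ^ 2 : ℝ).toNNReal)
    (heps : Measure.map eps μ = gaussianReal 0 (1 / n : ℝ).toNNReal)
    (hy2 : Measure.map y2 μ = gaussianReal 0 (σ ^ 2 + 1 / n : ℝ).toNNReal)
    (hind1 : IndepFun mu1 eps μ)
    (hind2 : IndepFun (fun ω => (mu1 ω, eps ω)) y2 μ)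
    (w1 w2 : ℝ) (hw : w1 + w2 = 1) :
    (∫ ω, 2 * ((mu1 ω + eps ω) - mu1 ω)
        * (w1 * (mu1 ω + eps ω) + w2 * y2 ω) ∂μ) = 2 * w1 / n ∧
    (∫ ω, (2 * ((mu1 ω + eps ω) - mu1 ω)
          * (w1 * (mu1 ω + eps ω) + w2 * y2 ω) - 2 * w1 / n) ^ 2 ∂μ)
      = 4 * (σ ^ 2 + 2 / n) * w1 ^ 2 / n + 4 * (σ ^ 2 + 1 / n) * w2 ^ 2 / n :=
  stmt_3_general μ σ n mu1 eps y2 hmu heps hy2 hind1 hind2 w1 w2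
end
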